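/- Consider the parity MDP with states {qI, qM, ua, ub, uc, wI, wa, wb, wc, v1, v2} and colors C(qI)=C(ua)=C(ub)=C(uc)=0, C(qM)=3, C(wI)=C(wa)=C(wb)=C(wc)=C(v1)=1, C(v2)=2; initial state qI; transitions: from qI the single action a leads to qM with probability 0.6 and to wI with probability 0.4; from qM action a leads to ua with probability 0.9 and to wa with probability 0.1, action b leads to ub with probability 0.8 and to wb with probability 0.2, action c leads to uc with probability 0.7 and to wc with probability 0.3, and action d leads to v2 with probability 0.6 and to v1 with probability 0.4; from ua the single action a leads to qM with probability 0.7 and to wa with probability 0.3; from ub the single action a leads to qM with probability 0.8 and to wb with probability 0.2; from uc the single action a leads to qM with probability 0.9 and to wc with probability 0.1; the states wI, wa, wb, wc, v1, v2 are absorbing (self-loop with probability 1). This parity MDP admits a finite-state 0.54-risk-averse policy (choosing at the successive visits to qM the actions a, b, c, d in this order), but it admits no positional 0.54-risk-averse policy. -/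

import Mathlib

open scoped BigOperators

/-- A (finite) Markov decision process with partial transition function
`P : S × A → D(S) ∪ {⊥}` (represented via `Option`) and initial state `init`. -/
structure MDP (S A : Type) [Fintype S] [Fintype A] where
  P : S → A → Option (S → ℝ)
  init : S

/-- Well-formedness of an MDP: every defined `P s a` is a probability distribution,
and every state has at least one enabled action. -/
def MDP.WellFormed {S A : Type} [Fintype S] [Fintype A] (M : MDP S A) : Prop :=
  (∀ s a d, M.P s a = some d → (∀ s', 0 ≤ d s') ∧ ∑ s', d s' = 1) ∧
  (∀ s, ∃ a, M.P s a ≠ none)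

/-- A parity MDP: an MDP together with a coloring of its states. -/
structure ParityMDP (S A : Type) [Fintype S] [Fintype A] extends MDP S A where
  C : S → ℕ

/-- The transition kernel of an MDP as a real-valued function (`0` on disabled actions). -/
noncomputable def MDP.K {S A : Type} [Fintype S] [Fintype A] (M : MDP S A)
    (s : S) (a : A) (s' : S) : ℝ :=
  (M.P s a).elim 0 fun d => d s'

/-- A policy for an MDP: a map from finite histories to distributions over actions,
supported on actions enabled at the last state of the history. -/
structure MDP.Policy {S A : Type} [Fintype S] [Fintype A] (M : MDP S A) where
  f : List S → A → ℝ
  nonneg : ∀ h a, 0 ≤ f h a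
  sum_one : ∀ h, ∑ a, f h a = 1
  support : ∀ (h : List S) (s : S) (a : A), h.getLast? = some s → M.P s a = none → f h a = 0

/-- One-step probability, in the Markov chain over histories induced by kernel `K`
and (the action-distribution map) `fp`, of moving from history `h` to `h ++ [t']`. -/
noncomputable def stepP {T A : Type} [Fintype A] (K : T → A → T → ℝ)
    (fp : List T → A → ℝ) (h : List T) (t' : T) : ℝ :=
  h.getLast?.elim 0 fun t => ∑ a, fp h a * K t a t'

/-- Probability of the finite continuation `u` after history `h` in the induced chain. -/
noncomputable def contP {T A : Type} [Fintype A] (K : T → A → T → ℝ)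
    (fp : List T → A → ℝ) : List T → List T → ℝ
  | _, [] => 1
  | h, t' :: u => stepP K fp h t' * contP K fp (h ++ [t']) u

/-- `u` is a (nonempty) continuation of `h` hitting the set of histories `Tgt`
for the first time at its end. -/
def IsFirstHit {T : Type} (Tgt : Set (List T)) (h u : List T) : Prop :=
  u ≠ [] ∧ (h ++ u) ∈ Tgt ∧ ∀ v, v <+: u → v ≠ [] → v ≠ u → (h ++ v) ∉ Tgt

/-- Probability, from history `h`, of eventually reaching some proper extension of `h`
belonging to the set of histories `Tgt`, in the chain induced by `K` and `fp`. -/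
noncomputable def reachP {T A : Type} [Fintype A] (K : T → A → T → ℝ)
    (fp : List T → A → ℝ) (h : List T) (Tgt : Set (List T)) : ℝ :=
  ∑' u : {u : List T // IsFirstHit Tgt h u}, contP K fp h u.1

open scoped Classical in
/-- Probability, starting from state `t0`, of eventually visiting a state in `G`
(the start state itself counts). -/
noncomputable def visitP {T A : Type} [Fintype A] (K : T → A → T → ℝ)
    (fp : List T → A → ℝ) (t0 : T) (G : Set T) : ℝ :=
  if t0 ∈ G then 1 else reachP K fp [t0] {h | ∃ t, h.getLast? = some t ∧ t ∈ G}

/-- A policy over an arbitrary state space (used for derived/reachability MDPs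
whose kernels are given directly). -/
structure GPolicy (T A : Type) [Fintype A] where
  f : List T → A → ℝ
  nonneg : ∀ h a, 0 ≤ f h a
  sum_one : ∀ h, ∑ a, f h a = 1

/-- The optimal reachability value of state `t0` w.r.t. goal set `G`:
the supremum over policies of the probability of visiting `G` from `t0`. -/
noncomputable def valueP {T A : Type} [Fintype A] (K : T → A → T → ℝ)
    (G : Set T) (t0 : T) : ℝ :=
  ⨆ fp : GPolicy T A, visitP K fp.f t0 G

/-- `s'` is a possible successor of `s` in the MDP. -/
def MDP.IsStep {S A : Type} [Fintype S] [Fintype A] (M : MDP S A) (s s' : S) : Prop :=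
  ∃ a d, M.P s a = some d ∧ 0 < d s'

/-- `π` is an infinite trace of the MDP. -/
def MDP.IsInfTrace {S A : Type} [Fintype S] [Fintype A] (M : MDP S A) (π : ℕ → S) : Prop :=
  ∀ i, M.IsStep (π i) (π (i + 1))

/-- The prefix `π 0 … π n` of an infinite trace, as a list. -/
def prefixList {S : Type} (π : ℕ → S) (n : ℕ) : List S := (List.range (n + 1)).map π

/-- Along the infinite trace `π`, the labeling `l` strictly decreases at most `k` times. -/
def DecreasesAtMost {S : Type} (l : List S → ℕ) (π : ℕ → S) (k : ℕ) : Prop :=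
  ∀ n, ((Finset.range n).filter fun i => l (prefixList π (i + 1)) < l (prefixList π i)).card ≤ k

/-- The policy `fp`, with labelings `l` (goal colors) and `l'` (goal indicators),
is `p`-risk-averse for the parity MDP `M` from initial state `q`. -/
structure RiskAverseFrom {S A : Type} [Fintype S] [Fintype A] (M : ParityMDP S A)
    (fp : M.toMDP.Policy) (l : List S → ℕ) (l' : List S → Bool) (p : ℝ) (q : S) : Prop where
  /-- (1) there is `k` such that along every infinite trace, `l` decreases at most `k` times -/
  bounded : ∃ k, ∀ π : ℕ → S, π 0 = q → M.toMDP.IsInfTrace π → DecreasesAtMost l π k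
  /-- (2a) `l` is always even -/
  l_even : ∀ h : List S, Even (l h)
  /-- (2b) `l' h = true` implies the color of the last state is even and at least `l h` -/
  goal_label : ∀ (h : List S) (s : S), h.getLast? = some s → l' h = true →
    l h ≤ M.C s ∧ Even (M.C s)
  /-- (3) if the color of the last state is odd then it is smaller than `l h` -/
  odd_label : ∀ (h : List S) (s : S), h.getLast? = some s → Odd (M.C s) → M.C s < l h
  /-- (4) from the initial history and from every history labeled `true` by `l'`,
  some extension labeled `true` by `l'` is reached with probability at least `p` -/
  reach_goal : ∀ t : List S, t.head? = some q → (t = [q] ∨ l' t = true) →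
    p ≤ reachP M.toMDP.K fp.f t {h | l' h = true}

/-- The parity MDP `M` admits a `p`-risk-averse policy (from its initial state). -/
def AdmitsRA {S A : Type} [Fintype S] [Fintype A] (M : ParityMDP S A) (p : ℝ) : Prop :=
  ∃ (fp : M.toMDP.Policy) (l : List S → ℕ) (l' : List S → Bool),
    RiskAverseFrom M fp l l' p M.toMDP.init

/-- For risk level `p`, state `q` is `(k,c)`-winning: there is a `p`-risk-averse policy
from `q` with `l ε = c` along which goal colors decrease at most `k` times. -/
def kcWinning {S A : Type} [Fintype S] [Fintype A] (M : ParityMDP S A)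
    (p : ℝ) (k c : ℕ) (q : S) : Prop :=
  ∃ (fp : M.toMDP.Policy) (l : List S → ℕ) (l' : List S → Bool),
    RiskAverseFrom M fp l l' p q ∧ l [] = c ∧
    ∀ π : ℕ → S, π 0 = q → M.toMDP.IsInfTrace π → DecreasesAtMost l π k

/-- The least even upper bound on the colors occurring in the parity MDP. -/
noncomputable def cMaxEven {S A : Type} [Fintype S] [Fintype A] (M : ParityMDP S A) : ℕ :=
  sInf {n : ℕ | Even n ∧ ∀ s : S, M.C s ≤ n}

/-- A policy is finite-state if it is computed by a deterministic finite automaton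
(finite state set `Q`, transition function `δ`, initial state `q0`) reading the
history of MDP states, together with an output map `Q → D(A)`. -/
def MDP.Policy.IsFiniteState {S A : Type} [Fintype S] [Fintype A] {M : MDP S A}
    (fp : M.Policy) : Prop :=
  ∃ (Q : Type) (_ : Fintype Q) (δ : Q → S → Q) (q0 : Q) (out : Q → A → ℝ),
    ∀ h : List S, fp.f h = out (h.foldl δ q0)

/-- A policy is positional if its choice depends only on the last state of the history. -/
def MDP.Policy.IsPositional {S A : Type} [Fintype S] [Fintype A] {M : MDP S A}
    (fp : M.Policy) : Prop :=
  ∀ h₁ h₂ : List S, h₁.getLast? = h₂.getLast? → fp.f h₁ = fp.f h₂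

/-- States of the example parity MDP of Figure 3. -/
inductive St7 : Type
  | qI | qM | ua | ub | uc | wI | wa | wb | wc | v1 | v2
  deriving DecidableEq

instance : Fintype St7 where
  elems := {.qI, .qM, .ua, .ub, .uc, .wI, .wa, .wb, .wc, .v1, .v2}
  complete := by intro x; cases x <;> simp

/-- Actions of the example parity MDP of Figure 3. -/
inductive Act7 : Type
  | a | b | c | d
  deriving DecidableEq

instance : Fintype Act7 where
  elems := {.a, .b, .c, .d}
  complete := by intro x; cases x <;> simp

/-- The distribution putting probability `px` on `x` and `py` on `y`. -/
noncomputable def d2 {S : Type} [DecidableEq S] (x y : S) (px py : ℝ) : S → ℝ :=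
  fun s => (if s = x then px else 0) + (if s = y then py else 0)

/-- The Dirac distribution on `x`. -/
noncomputable def d1 {S : Type} [DecidableEq S] (x : S) : S → ℝ :=
  fun s => if s = x then 1 else 0

/-- Transition function of the example parity MDP of Figure 3. -/
noncomputable def P7 : St7 → Act7 → Option (St7 → ℝ)
  | .qI, .a => some (d2 .qM .wI 0.6 0.4)
  | .qI, _ => none
  | .qM, .a => some (d2 .ua .wa 0.9 0.1)
  | .qM, .b => some (d2 .ub .wb 0.8 0.2)
  | .qM, .c => some (d2 .uc .wc 0.7 0.3)
  | .qM, .d => some (d2 .v2 .v1 0.6 0.4)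
  | .ua, .a => some (d2 .qM .wa 0.7 0.3)
  | .ua, _ => none
  | .ub, .a => some (d2 .qM .wb 0.8 0.2)
  | .ub, _ => none
  | .uc, .a => some (d2 .qM .wc 0.9 0.1)
  | .uc, _ => none
  | .wI, .a => some (d1 .wI)
  | .wI, _ => none
  | .wa, .a => some (d1 .wa)
  | .wa, _ => none
  | .wb, .a => some (d1 .wb)
  | .wb, _ => none
  | .wc, .a => some (d1 .wc)
  | .wc, _ => none
  | .v1, .a => some (d1 .v1)
  | .v1, _ => none
  | .v2, .a => some (d1 .v2)
  | .v2, _ => none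

/-- Coloring of the example parity MDP of Figure 3. -/
def C7 : St7 → ℕ
  | .qI => 0 | .qM => 3 | .ua => 0 | .ub => 0 | .uc => 0
  | .wI => 1 | .wa => 1 | .wb => 1 | .wc => 1 | .v1 => 1 | .v2 => 2

/-- The example parity MDP of Figure 3. -/
noncomputable def M7 : ParityMDP St7 Act7 := { P := P7, init := .qI, C := C7 }


/-!
The memory policy follows the run `qI qM ua qM ub qM uc qM v2 v2 …`, playing `a, b, c, d` at the
successive visits of `qM`. Its goals are the visits of `ua, ub, uc` and of `v2` on this run, each
reached from the previous one with probability `0.6·0.9`, `0.7·0.8`, `0.8·0.7`, `0.9·0.6` or `1`,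
and the goal labels only decrease when one of the first four goals is hit.

A positional policy has to reach a goal from `qI` with probability `0.54`. Any goal reached from
`qI` passes through `qM` and then through one of `ua, ub, uc, v2`, which happens with probability
at most `0.6·(0.9 p(a) + 0.8 p(b) + 0.7 p(c) + 0.6 p(d))` for the action distribution `p` at `qM`,
so `p(a) = 1`. Then every positive-probability path to an even color stays on the run
`qI qM ua qM ua …`, along which goals recur forever. Between two of them lies a visit of `qM`,
whose color `3` forces the label above `3`, before the next goal forces it down to `0`: the label
decreases unboundedly often.
-/

section InducedChain

variable {T A : Type} [Fintype A] (K : T → A → T → ℝ) (fp : List T → A → ℝ)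

theorem contP_append (h u v : List T) :
    contP K fp h (u ++ v) = contP K fp h u * contP K fp (h ++ u) v := by
  induction u generalizing h with
  | nil => simp [contP]
  | cons t u ih => simp [contP, ih, mul_assoc]

theorem exists_ne_zero_of_stepP_ne_zero {h : List T} {s t : T} (hh : h.getLast? = some s)
    (hstep : stepP K fp h t ≠ 0) : ∃ a, fp h a ≠ 0 ∧ K s a t ≠ 0 := by
  rw [stepP, hh] at hstep
  obtain ⟨a, -, ha⟩ := Finset.exists_ne_zero_of_sum_ne_zero hstep
  exact ⟨a, left_ne_zero_of_mul ha, right_ne_zero_of_mul ha⟩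

theorem forall_mem_eq_of_contP_ne_zero {s : T} (habs : ∀ a t, K s a t ≠ 0 → t = s)
    {h u : List T} (hh : h.getLast? = some s) (hu : contP K fp h u ≠ 0) : ∀ t ∈ u, t = s := by
  induction u generalizing h with
  | nil => simp
  | cons t u ih =>
    obtain ⟨a, -, ha⟩ := exists_ne_zero_of_stepP_ne_zero K fp hh (left_ne_zero_of_mul hu)
    obtain rfl := habs a t ha
    simpa using ih List.getLast?_concat (right_ne_zero_of_mul hu)

theorem exists_contP_ne_zero_of_reachP_pos {h : List T} {Tgt : Set (List T)}
    (hpos : 0 < reachP K fp h Tgt) : ∃ u, IsFirstHit Tgt h u ∧ contP K fp h u ≠ 0 := by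
  by_contra! hzero
  exact hpos.ne' (by simp [reachP, fun u : {u // IsFirstHit Tgt h u} => hzero u.1 u.2])

end InducedChain

section FirstHit

variable {T : Type} {Tgt : Set (List T)} {h : List T}

theorem IsFirstHit.eq_of_prefix {u v : List T} (hu : IsFirstHit Tgt h u)
    (hv : IsFirstHit Tgt h v) (huv : u <+: v) : u = v := by
  by_contra hne
  exact hv.2.2 u huv hu.1 hne hu.2.1

theorem isFirstHit_singleton {x : T} (hx : h ++ [x] ∈ Tgt) : IsFirstHit Tgt h [x] := by
  refine ⟨List.cons_ne_nil _ _, hx, fun v hv hne hvx => ?_⟩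
  rcases List.prefix_cons_iff.1 hv with rfl | ⟨w, rfl, hw⟩
  · exact absurd rfl hne
  · exact absurd (by rw [List.prefix_nil.1 hw]) hvx

theorem isFirstHit_pair {x y : T} (hx : h ++ [x] ∉ Tgt) (hxy : h ++ [x, y] ∈ Tgt) :
    IsFirstHit Tgt h [x, y] := by
  refine ⟨List.cons_ne_nil _ _, hxy, fun v hv hne hvxy => ?_⟩
  rcases List.prefix_cons_iff.1 hv with rfl | ⟨w, rfl, hw⟩
  · exact absurd rfl hne
  rcases List.prefix_cons_iff.1 hw with rfl | ⟨w', rfl, hw'⟩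
  · exact hx
  · exact absurd (by rw [List.prefix_nil.1 hw']) hvxy

end FirstHit

namespace MDP.WellFormed

variable {S A : Type} [Fintype S] [Fintype A] {M : MDP S A}

theorem K_nonneg (hM : M.WellFormed) (s : S) (a : A) (t : S) : 0 ≤ M.K s a t := by
  unfold MDP.K
  cases hP : M.P s a with
  | none => exact le_rfl
  | some d => exact (hM.1 s a d hP).1 t

theorem sum_K_le_one (hM : M.WellFormed) (s : S) (a : A) : ∑ t, M.K s a t ≤ 1 := by
  unfold MDP.K
  cases hP : M.P s a with
  | none => simp
  | some d => exact (hM.1 s a d hP).2.le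

theorem stepP_nonneg (hM : M.WellFormed) (fp : M.Policy) (h : List S) (t : S) :
    0 ≤ stepP M.K fp.f h t := by
  unfold stepP
  cases h.getLast? with
  | none => exact le_rfl
  | some s => exact Finset.sum_nonneg fun a _ => mul_nonneg (fp.nonneg h a) (hM.K_nonneg s a t)

theorem sum_stepP_le_one (hM : M.WellFormed) (fp : M.Policy) (h : List S) :
    ∑ t, stepP M.K fp.f h t ≤ 1 := by
  unfold stepP
  cases h.getLast? with
  | none => simp
  | some s =>
    calc ∑ t, ∑ a, fp.f h a * M.K s a t = ∑ a, fp.f h a * ∑ t, M.K s a t := by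
          rw [Finset.sum_comm]; simp only [Finset.mul_sum]
      _ ≤ ∑ a, fp.f h a * 1 := by
          gcongr with a
          · exact fp.nonneg h a
          · exact hM.sum_K_le_one s a
      _ = 1 := by simp [fp.sum_one h]

theorem contP_nonneg (hM : M.WellFormed) (fp : M.Policy) (h u : List S) :
    0 ≤ contP M.K fp.f h u := by
  induction u generalizing h with
  | nil => exact zero_le_one
  | cons t u ih => exact mul_nonneg (hM.stepP_nonneg fp h t) (ih _)

theorem sum_contP_le_one (hM : M.WellFormed) (fp : M.Policy) {F : Finset (List S)}
    (hF : ∀ u ∈ F, ∀ v ∈ F, u <+: v → u = v) (h : List S) :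
    ∑ u ∈ F, contP M.K fp.f h u ≤ 1 := by
  classical
  obtain ⟨N, hN⟩ : ∃ N, ∀ u ∈ F, u.length ≤ N := ⟨_, fun u => Finset.le_sup⟩
  induction N generalizing F h with
  | zero =>
    have hsub : F ⊆ {[]} := fun u hu =>
      Finset.mem_singleton.2 (List.length_eq_zero_iff.1 (Nat.le_zero.1 (hN u hu)))
    rcases Finset.subset_singleton_iff.1 hsub with rfl | rfl <;> simp [contP]
  | succ N ih =>
    by_cases hnil : [] ∈ F
    · have hsub : F ⊆ {[]} := fun u hu =>
        Finset.mem_singleton.2 (hF [] hnil u hu List.nil_prefix).symm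
      rcases Finset.subset_singleton_iff.1 hsub with rfl | rfl <;> simp [contP]
    have hfiber (t : S) :
        ∑ u ∈ F with u.head? = some t, contP M.K fp.f h u ≤ stepP M.K fp.f h t := by
      rw [← Finset.sum_preimage (List.cons t) {u ∈ F | u.head? = some t}
        List.cons_injective.injOn _ fun u hu hu' =>
          absurd ⟨u.tail, List.cons_head?_tail (Finset.mem_filter.1 hu).2⟩ hu']
      simp only [contP, ← Finset.mul_sum]
      refine mul_le_of_le_one_right (hM.stepP_nonneg fp h t) (ih (fun u hu v hv huv => ?_) _ ?_)
      · simp only [Finset.mem_preimage, Finset.mem_filter] at hu hv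
        exact List.cons_injective (hF _ hu.1 _ hv.1 (List.cons_prefix_cons.2 ⟨rfl, huv⟩))
      · intro u hu
        simpa using hN _ (Finset.mem_filter.1 (Finset.mem_preimage.1 hu)).1
    have hnone : ∑ u ∈ F with u.head? = none, contP M.K fp.f h u = 0 :=
      Finset.sum_eq_zero fun u hu => by
        obtain ⟨huF, hu⟩ := Finset.mem_filter.1 hu
        exact absurd (List.head?_eq_none_iff.1 hu ▸ huF) hnil
    calc ∑ u ∈ F, contP M.K fp.f h u
        = ∑ o : Option S, ∑ u ∈ F with u.head? = o, contP M.K fp.f h u :=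
          (Finset.sum_fiberwise F _ _).symm
      _ ≤ ∑ t, stepP M.K fp.f h t := by
          rw [Fintype.sum_option, hnone, zero_add]
          exact Finset.sum_le_sum fun t _ => hfiber t
      _ ≤ 1 := hM.sum_stepP_le_one fp h

theorem sum_contP_le_contP_of_prefix (hM : M.WellFormed) (fp : M.Policy)
    {F : Finset (List S)} (hF : ∀ u ∈ F, ∀ v ∈ F, u <+: v → u = v) (h p : List S)
    (hp : ∀ u ∈ F, p <+: u) : ∑ u ∈ F, contP M.K fp.f h u ≤ contP M.K fp.f h p := by
  classical
  have hsplit : ∀ u ∈ F, p ++ u.drop p.length = u := fun u hu =>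
    List.prefix_iff_eq_append.1 (hp u hu)
  have hinj : Set.InjOn (List.drop p.length) (F : Set (List S)) := fun u hu v hv huv => by
    rw [← hsplit u (Finset.mem_coe.1 hu), ← hsplit v (Finset.mem_coe.1 hv), huv]
  calc ∑ u ∈ F, contP M.K fp.f h u
      = contP M.K fp.f h p * ∑ w ∈ F.image (List.drop p.length), contP M.K fp.f (h ++ p) w := by
        rw [Finset.sum_image hinj, Finset.mul_sum]
        refine Finset.sum_congr rfl fun u hu => ?_
        rw [← contP_append, hsplit u hu]
    _ ≤ contP M.K fp.f h p := by
        refine mul_le_of_le_one_right (hM.contP_nonneg fp h p)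
          (hM.sum_contP_le_one fp (fun u hu v hv huv => ?_) _)
        obtain ⟨u, huF, rfl⟩ := Finset.mem_image.1 hu
        obtain ⟨v, hvF, rfl⟩ := Finset.mem_image.1 hv
        refine congrArg _ (hF u huF v hvF ?_)
        rw [← hsplit u huF, ← hsplit v hvF]
        exact (List.prefix_append_right_inj p).2 huv

theorem summable_contP_isFirstHit (hM : M.WellFormed) (fp : M.Policy) (h : List S)
    (Tgt : Set (List S)) :
    Summable fun u : {u // IsFirstHit Tgt h u} => contP M.K fp.f h u.1 := by
  classical
  refine summable_of_sum_le (c := 1) (fun u => hM.contP_nonneg fp h u.1) fun F => ?_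
  rw [← Finset.sum_image fun u _ v _ => Subtype.ext]
  refine hM.sum_contP_le_one fp (fun u hu v hv huv => ?_) h
  obtain ⟨u, -, rfl⟩ := Finset.mem_image.1 hu
  obtain ⟨v, -, rfl⟩ := Finset.mem_image.1 hv
  exact u.2.eq_of_prefix v.2 huv

theorem contP_le_reachP (hM : M.WellFormed) (fp : M.Policy) {h u : List S}
    {Tgt : Set (List S)} (hu : IsFirstHit Tgt h u) :
    contP M.K fp.f h u ≤ reachP M.K fp.f h Tgt :=
  (hM.summable_contP_isFirstHit fp h Tgt).le_tsum ⟨u, hu⟩ fun v _ => hM.contP_nonneg fp h v.1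

theorem reachP_le_sum_contP (hM : M.WellFormed) (fp : M.Policy) {h : List S}
    {Tgt : Set (List S)} (n : ℕ) (P : Finset (List S))
    (hP : ∀ u, IsFirstHit Tgt h u → contP M.K fp.f h u ≠ 0 → u.take n ∈ P) :
    reachP M.K fp.f h Tgt ≤ ∑ p ∈ P, contP M.K fp.f h p := by
  classical
  refine Real.tsum_le_of_sum_le (fun u => hM.contP_nonneg fp h u.1) fun F => ?_
  rw [← Finset.sum_image fun u _ v _ => Subtype.ext]
  set G := F.image Subtype.val
  have hG : ∀ u ∈ G, IsFirstHit Tgt h u := fun u hu => by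
    obtain ⟨u, -, rfl⟩ := Finset.mem_image.1 hu
    exact u.2
  rw [← Finset.sum_filter_of_ne fun u hu hne => hP u (hG u hu) hne]
  set G' := {u ∈ G | u.take n ∈ P}
  have hG'G {p u : List S} (hu : u ∈ {u ∈ G' | u.take n = p}) : u ∈ G :=
    (Finset.mem_filter.1 (Finset.mem_filter.1 hu).1).1
  calc ∑ u ∈ G', contP M.K fp.f h u
      = ∑ p ∈ P, ∑ u ∈ G' with u.take n = p, contP M.K fp.f h u :=
        (Finset.sum_fiberwise_of_maps_to (fun u hu => (Finset.mem_filter.1 hu).2) _).symm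
    _ ≤ ∑ p ∈ P, contP M.K fp.f h p :=
        Finset.sum_le_sum fun p _ => hM.sum_contP_le_contP_of_prefix fp
          (fun u hu v hv huv => (hG u (hG'G hu)).eq_of_prefix (hG v (hG'G hv)) huv) h p
          fun u hu => (Finset.mem_filter.1 hu).2 ▸ List.take_prefix n u

end MDP.WellFormed

theorem exists_descent_of_lt {L : ℕ → ℕ} {a b : ℕ} (hab : a ≤ b) (hL : L b < L a) :
    ∃ j, a ≤ j ∧ j < b ∧ L (j + 1) < L j := by
  by_contra! hmono
  have : ∀ c, a ≤ c → c ≤ b → L a ≤ L c := by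
    intro c hac
    induction c, hac using Nat.le_induction with
    | base => exact fun _ => le_rfl
    | succ c hac ih => exact fun hcb => (ih (Nat.le_of_succ_le hcb)).trans (hmono c hac hcb)
  exact (this b hab le_rfl).not_gt hL

open Finset in
theorem card_descents_lt_of_lt {L : ℕ → ℕ} {a b c : ℕ} (hac : a ≤ c) (hcb : c ≤ b)
    (hL : L b < L c) :
    #{i ∈ range a | L (i + 1) < L i} < #{i ∈ range b | L (i + 1) < L i} := by
  obtain ⟨j, hcj, hjb, hj⟩ := exists_descent_of_lt hcb hL
  refine card_lt_card
    ⟨filter_subset_filter _ (range_subset_range.2 (hac.trans hcb)), fun h => ?_⟩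
  have := mem_range.1 (mem_filter.1 (h (mem_filter.2 ⟨mem_range.2 hjb, hj⟩))).1
  omega

section PrefixList

variable {S : Type}

theorem prefixList_succ (π : ℕ → S) (n : ℕ) :
    prefixList π (n + 1) = prefixList π n ++ [π (n + 1)] := by
  simp [prefixList, List.range_succ]

theorem length_prefixList (π : ℕ → S) (n : ℕ) : (prefixList π n).length = n + 1 := by
  simp [prefixList]

theorem getLast?_prefixList (π : ℕ → S) (n : ℕ) :
    (prefixList π n).getLast? = some (π n) := by
  cases n with
  | zero => rfl
  | succ n => rw [prefixList_succ]; exact List.getLast?_concat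

theorem head?_prefixList (π : ℕ → S) (n : ℕ) : (prefixList π n).head? = some (π 0) := by
  simp [prefixList, List.range_succ_eq_map]

theorem prefixList_eq_prefixList_of_succ {π ρ : ℕ → S} {n : ℕ}
    (h : prefixList π (n + 1) = prefixList ρ (n + 1)) : prefixList π n = prefixList ρ n := by
  rw [prefixList_succ, prefixList_succ] at h
  exact List.append_inj_left' h rfl

end PrefixList

namespace M7

open St7

theorem sum_act (g : Act7 → ℝ) : ∑ act, g act = g .a + g .b + g .c + g .d := by
  simp [Finset.univ, Fintype.elems, add_assoc]

theorem sum_d2 (x y : St7) (px py : ℝ) : ∑ s, d2 x y px py s = px + py := by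
  simp [d2, Finset.sum_add_distrib]

theorem sum_d1 (x : St7) : ∑ s, d1 x s = 1 := by
  simp [d1]

theorem wellFormed : M7.toMDP.WellFormed := by
  refine ⟨fun s act d hd => ?_, fun s => ⟨.a, by cases s <;> simp [M7, P7]⟩⟩
  cases s <;> cases act <;> simp only [M7, P7, reduceCtorEq, Option.some.injEq] at hd <;>
    subst hd <;>
    first
    | exact ⟨fun s => by unfold d2; split_ifs <;> norm_num, by rw [sum_d2]; norm_num⟩
    | exact ⟨fun s => by unfold d1; split_ifs <;> norm_num, sum_d1 _⟩

def run (n : ℕ) : St7 := [qI, qM, ua, qM, ub, qM, uc, qM].getD n v2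

-- After reading `prefixList run n` with `n < 8` the automaton is in state `n + 1`;
-- state `9` is absorbing.
def memory : Fin 10 → St7 → Fin 10
  | 0, qI => 1
  | 1, qM => 2
  | 2, ua => 3
  | 3, qM => 4
  | 4, ub => 5
  | 5, qM => 6
  | 6, uc => 7
  | 7, qM => 8
  | _, _ => 9

def choice : Fin 10 → Act7
  | 4 => .b | 6 => .c | 8 => .d | _ => .a

theorem choice_memory_of_ne_qM (m : Fin 10) {s : St7} (hs : s ≠ qM) :
    choice (memory m s) = .a := by
  revert m s; decide

noncomputable def policy : M7.toMDP.Policy where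
  f h act := if act = choice (h.foldl memory 0) then 1 else 0
  nonneg h act := by split_ifs <;> norm_num
  sum_one h := by simp
  support h s act hs hP := by
    have hsqM : s ≠ qM := by rintro rfl; cases act <;> simp [M7, P7] at hP
    have ha : act ≠ .a := by rintro rfl; cases s <;> simp [M7, P7] at hP
    rw [← List.dropLast_append_getLast? s hs, List.foldl_concat, choice_memory_of_ne_qM _ hsqM]
    simp [ha]

theorem policy_isFiniteState : policy.IsFiniteState :=
  ⟨Fin 10, inferInstance, memory, 0, fun q act => if act = choice q then 1 else 0, fun _ => rfl⟩

theorem run_of_le {n : ℕ} (hn : 8 ≤ n) : run n = v2 := List.getD_eq_default _ _ hn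

def runAction (n : ℕ) : Act7 :=
  if n = 3 then .b else if n = 5 then .c else if n = 7 then .d else .a

theorem runAction_of_le {n : ℕ} (hn : 8 ≤ n) : runAction n = .a := by
  simp only [runAction, show n ≠ 3 ∧ n ≠ 5 ∧ n ≠ 7 by omega, if_false]

theorem foldl_memory_prefixList_run {n : ℕ} (hn : 8 ≤ n) :
    (prefixList run n).foldl memory 0 = 9 := by
  induction n, hn using Nat.le_induction with
  | base => rfl
  | succ n _ ih => rw [prefixList_succ, List.foldl_concat, ih]; rfl

theorem choice_foldl_memory_prefixList_run (n : ℕ) :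
    choice ((prefixList run n).foldl memory 0) = runAction n := by
  rcases lt_or_ge n 8 with hn | hn
  · interval_cases n <;> rfl
  · rw [foldl_memory_prefixList_run hn, runAction_of_le hn]
    rfl

theorem stepP_policy {h : List St7} {s : St7} (hs : h.getLast? = some s) (t : St7) :
    stepP M7.toMDP.K policy.f h t = M7.toMDP.K s (choice (h.foldl memory 0)) t := by
  simp [stepP, hs, policy]

theorem stepP_policy_run (n : ℕ) :
    stepP M7.toMDP.K policy.f (prefixList run n) (run (n + 1)) =
      M7.toMDP.K (run n) (runAction n) (run (n + 1)) := by
  rw [stepP_policy (getLast?_prefixList run n), choice_foldl_memory_prefixList_run]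

theorem contP_policy_run_pair (n : ℕ) :
    contP M7.toMDP.K policy.f (prefixList run n) [run (n + 1), run (n + 2)] =
      M7.toMDP.K (run n) (runAction n) (run (n + 1)) *
        M7.toMDP.K (run (n + 1)) (runAction (n + 1)) (run (n + 2)) := by
  simp [contP, ← prefixList_succ, stepP_policy_run]

def IsGoalIndex (n : ℕ) : Prop := n = 2 ∨ n = 4 ∨ n = 6 ∨ 8 ≤ n

theorem isGoalIndex_of_le {n : ℕ} (hn : 8 ≤ n) : IsGoalIndex n := Or.inr (Or.inr (Or.inr hn))

def IsGoal (h : List St7) : Prop := ∃ n, IsGoalIndex n ∧ h = prefixList run n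

open scoped Classical in
noncomputable def goal (h : List St7) : Bool := decide (IsGoal h)

theorem goal_eq_true {h : List St7} : goal h = true ↔ IsGoal h := by
  simp [goal]

open scoped Classical in
noncomputable def label (h : List St7) : ℕ := if IsGoal h then C7 (h.getLastD qI) else 4

theorem isGoal_prefixList_run {n : ℕ} : IsGoal (prefixList run n) ↔ IsGoalIndex n := by
  refine ⟨fun ⟨m, hm, h⟩ => ?_, fun hn => ⟨n, hn, rfl⟩⟩
  have := congrArg List.length h
  simp only [length_prefixList, add_left_inj] at this
  exact this ▸ hm

theorem C7_run_of_isGoalIndex {n : ℕ} (hn : IsGoalIndex n) :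
    C7 (run n) = 0 ∨ C7 (run n) = 2 := by
  rcases hn with rfl | rfl | rfl | hn
  · exact Or.inl rfl
  · exact Or.inl rfl
  · exact Or.inl rfl
  · exact Or.inr (by rw [run_of_le hn]; rfl)

theorem label_prefixList_run {n : ℕ} (hn : IsGoalIndex n) :
    label (prefixList run n) = C7 (run n) := by
  rw [label, if_pos (isGoal_prefixList_run.2 hn), List.getLastD_eq_getLast?, getLast?_prefixList]
  rfl

theorem label_eq_four {h : List St7} (hg : ¬ IsGoal h) : label h = 4 := if_neg hg

theorem label_even (h : List St7) : Even (label h) := by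
  by_cases hg : IsGoal h
  · obtain ⟨n, hn, rfl⟩ := hg
    rcases C7_run_of_isGoalIndex hn with h | h <;> rw [label_prefixList_run hn, h] <;> decide
  · rw [label_eq_four hg]; decide

theorem label_le_four (h : List St7) : label h ≤ 4 := by
  by_cases hg : IsGoal h
  · obtain ⟨n, hn, rfl⟩ := hg
    rcases C7_run_of_isGoalIndex hn with h | h <;> rw [label_prefixList_run hn, h] <;> decide
  · exact (label_eq_four hg).le

theorem label_le_and_even_of_isGoal {h : List St7} {s : St7} (hs : h.getLast? = some s)
    (hg : IsGoal h) : label h ≤ C7 s ∧ Even (C7 s) := by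
  obtain ⟨n, hn, rfl⟩ := hg
  obtain rfl : run n = s := Option.some_injective _ ((getLast?_prefixList run n).symm.trans hs)
  rw [← label_prefixList_run hn]
  exact ⟨le_rfl, label_even _⟩

theorem lt_label_of_odd {h : List St7} {s : St7} (hs : h.getLast? = some s)
    (hodd : Odd (C7 s)) : C7 s < label h := by
  by_cases hg : IsGoal h
  · exact absurd (label_le_and_even_of_isGoal hs hg).2 (Nat.not_even_iff_odd.2 hodd)
  · rw [label_eq_four hg]
    revert hodd
    cases s <;> decide

theorem mem_of_label_descent (π : ℕ → St7) {i : ℕ}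
    (hi : label (prefixList π (i + 1)) < label (prefixList π i)) :
    i ∈ ({1, 3, 5, 7} : Finset ℕ) := by
  have hg : IsGoal (prefixList π (i + 1)) := by
    by_contra hg
    exact (label_le_four _).not_gt (label_eq_four hg ▸ hi)
  obtain ⟨m, hm, hπ⟩ := hg
  obtain rfl : i + 1 = m := by simpa [length_prefixList] using congrArg List.length hπ
  have hi8 : i < 8 := by
    by_contra! hi8
    rw [hπ, prefixList_eq_prefixList_of_succ hπ, label_prefixList_run hm,
      label_prefixList_run (isGoalIndex_of_le hi8), run_of_le hi8, run_of_le (by omega)] at hi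
    exact lt_irrefl _ hi
  simp only [Finset.mem_insert, Finset.mem_singleton]
  rcases hm with h | h | h | h <;> omega

theorem decreasesAtMost_label (π : ℕ → St7) : DecreasesAtMost label π 4 := fun _ =>
  (Finset.card_le_card fun _ hi => mem_of_label_descent π (Finset.mem_filter.1 hi).2).trans
    (by decide)

theorem isFirstHit_run_pair {n : ℕ} (hn1 : ¬ IsGoalIndex (n + 1)) (hn2 : IsGoalIndex (n + 2)) :
    IsFirstHit {h | IsGoal h} (prefixList run n) [run (n + 1), run (n + 2)] :=
  isFirstHit_pair (by simpa [← prefixList_succ, isGoal_prefixList_run] using hn1)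
    (by rw [show prefixList run n ++ [run (n + 1), run (n + 2)] = prefixList run (n + 2) by
          simp [prefixList_succ]]
        exact isGoal_prefixList_run.2 hn2)

theorem isFirstHit_run_singleton {n : ℕ} (hn : 8 ≤ n) :
    IsFirstHit {h | IsGoal h} (prefixList run n) [run (n + 1)] :=
  isFirstHit_singleton <| by
    simpa [← prefixList_succ, isGoal_prefixList_run] using
      isGoalIndex_of_le (n := n + 1) (by omega)

theorem le_reachP_policy_prefixList_run {n : ℕ} (hn : n = 0 ∨ IsGoalIndex n) :
    0.54 ≤ reachP M7.toMDP.K policy.f (prefixList run n) {h | IsGoal h} := by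
  rcases lt_or_ge n 8 with h8 | h8
  · have hn' : n = 0 ∨ n = 2 ∨ n = 4 ∨ n = 6 := by unfold IsGoalIndex at hn; omega
    refine le_trans ?_ (wellFormed.contP_le_reachP _
      (isFirstHit_run_pair (by unfold IsGoalIndex; omega) (by unfold IsGoalIndex; omega)))
    rw [contP_policy_run_pair]
    rcases hn' with rfl | rfl | rfl | rfl <;> simp [MDP.K, M7, P7, d2, run, runAction] <;> norm_num
  · refine le_trans ?_ (wellFormed.contP_le_reachP _ (isFirstHit_run_singleton h8))
    rw [contP, contP, stepP_policy_run, mul_one, run_of_le h8, run_of_le (by omega),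
      runAction_of_le h8]
    norm_num [MDP.K, M7, P7, d1]

theorem riskAverseFrom_policy : RiskAverseFrom M7 policy label goal 0.54 qI where
  bounded := ⟨4, fun π _ _ => decreasesAtMost_label π⟩
  l_even := label_even
  goal_label _ _ hs hg := label_le_and_even_of_isGoal hs (goal_eq_true.1 hg)
  odd_label _ _ := lt_label_of_odd
  reach_goal t _ hgoal := by
    rw [show {h | goal h = true} = {h | IsGoal h} from Set.ext fun _ => goal_eq_true]
    rcases hgoal with rfl | hgoal
    · exact le_reachP_policy_prefixList_run (Or.inl rfl)
    · obtain ⟨n, hn, rfl⟩ := goal_eq_true.1 hgoal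
      exact le_reachP_policy_prefixList_run (Or.inr hn)

theorem K_absorbing {s : St7} (hs : C7 s = 1) {act : Act7} {t : St7}
    (hK : M7.toMDP.K s act t ≠ 0) : t = s := by
  cases s <;> cases act <;> cases t <;> simp_all [C7, MDP.K, M7, P7, d1]

theorem getLast?_eq_of_C7_eq_one (fp : List St7 → Act7 → ℝ) {h w : List St7} {y : St7}
    (hy : C7 y = 1) (hw : contP M7.toMDP.K fp (h ++ [y]) w ≠ 0) :
    (y :: w).getLast? = some y := by
  have := forall_mem_eq_of_contP_ne_zero _ _ (fun _ _ => K_absorbing hy) List.getLast?_concat hw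
  rw [List.getLast?_cons]
  cases hz : w.getLast? with
  | none => rfl
  | some z => rw [this z (List.mem_of_getLast? hz)]; rfl

theorem f_qI_eq_zero (fp : M7.toMDP.Policy) {act : Act7} (hact : act ≠ .a) : fp.f [qI] act = 0 :=
  fp.support [qI] qI act rfl (by cases act <;> simp_all [M7, P7])

theorem stepP_qI_qM (fp : M7.toMDP.Policy) : stepP M7.toMDP.K fp.f [qI] qM = 0.6 := by
  have h1 := fp.sum_one [qI]
  rw [sum_act, f_qI_eq_zero fp (by decide : Act7.b ≠ .a),
    f_qI_eq_zero fp (by decide : Act7.c ≠ .a), f_qI_eq_zero fp (by decide : Act7.d ≠ .a)] at h1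
  simp [stepP, sum_act, f_qI_eq_zero fp, MDP.K, M7, P7, d2]
  rw [show fp.f [qI] .a = 1 by linarith, one_mul]

theorem take_two_mem_of_isFirstHit (fp : M7.toMDP.Policy) {Tgt : Set (List St7)} {u : List St7}
    (hTgt : ∀ h ∈ Tgt, ∀ s, h.getLast? = some s → Even (C7 s)) (hu : IsFirstHit Tgt [qI] u)
    (hc : contP M7.toMDP.K fp.f [qI] u ≠ 0) :
    u.take 2 ∈ ({[qM, ua], [qM, ub], [qM, uc], [qM, v2]} : Finset (List St7)) := by
  obtain ⟨hne, hmem, -⟩ := hu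
  have hlast (s : St7) (hs : u.getLast? = some s) : Even (C7 s) :=
    hTgt _ hmem s (by rw [List.getLast?_append_of_ne_nil _ hne, hs])
  obtain _ | ⟨y, w⟩ := u
  · exact absurd rfl hne
  obtain ⟨act, -, hK⟩ := exists_ne_zero_of_stepP_ne_zero _ _ rfl (left_ne_zero_of_mul hc)
  have hw := right_ne_zero_of_mul hc
  have hy : y = qM ∨ C7 y = 1 := by cases act <;> cases y <;> simp_all [MDP.K, M7, P7, d2, C7]
  obtain rfl | hy := hy
  swap
  · exact absurd (hlast y (getLast?_eq_of_C7_eq_one fp.f hy hw)) (by simp [hy])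
  obtain _ | ⟨z, w⟩ := w
  · exact absurd (hlast qM rfl) (by decide)
  obtain ⟨act', -, hK'⟩ := exists_ne_zero_of_stepP_ne_zero _ _ rfl (left_ne_zero_of_mul hw)
  have hz : z = ua ∨ z = ub ∨ z = uc ∨ z = v2 ∨ C7 z = 1 := by
    cases act' <;> cases z <;> simp_all [MDP.K, M7, P7, d2, C7]
  obtain rfl | rfl | rfl | rfl | hz := hz
  · simp
  · simp
  · simp
  · simp
  · have := getLast?_eq_of_C7_eq_one fp.f hz (right_ne_zero_of_mul hw)
    exact absurd (hlast z (by rwa [List.getLast?_cons_cons])) (by simp [hz])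

theorem f_qI_qM_eq_zero_of_le_reachP (fp : M7.toMDP.Policy) {Tgt : Set (List St7)}
    (hTgt : ∀ h ∈ Tgt, ∀ s, h.getLast? = some s → Even (C7 s))
    (hreach : 0.54 ≤ reachP M7.toMDP.K fp.f [qI] Tgt) {act : Act7} (hact : act ≠ .a) :
    fp.f [qI, qM] act = 0 := by
  have hle := wellFormed.reachP_le_sum_contP fp 2 _
    fun u hu hc => take_two_mem_of_isFirstHit fp hTgt hu hc
  have hP : ∑ p ∈ ({[qM, ua], [qM, ub], [qM, uc], [qM, v2]} : Finset (List St7)),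
      contP M7.toMDP.K fp.f [qI] p = 0.6 * (0.9 * fp.f [qI, qM] .a + 0.8 * fp.f [qI, qM] .b +
        0.7 * fp.f [qI, qM] .c + 0.6 * fp.f [qI, qM] .d) := by
    rw [Finset.sum_insert (by decide), Finset.sum_insert (by decide),
      Finset.sum_insert (by decide), Finset.sum_singleton]
    simp only [contP, List.singleton_append, stepP_qI_qM, mul_one]
    simp [stepP, sum_act, MDP.K, M7, P7, d2]
    ring
  rw [hP] at hle
  have hsum := fp.sum_one [qI, qM]
  rw [sum_act] at hsum
  have := fp.nonneg [qI, qM]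
  cases act
  · exact absurd rfl hact
  all_goals linarith [this .a, this .b, this .c, this .d]

def aRun : ℕ → St7
  | 0 => qI
  | n + 1 => if aRun n = qM then ua else qM

theorem aRun_eq (n : ℕ) : aRun n = qI ∨ aRun n = qM ∨ aRun n = ua := by
  cases n with
  | zero => exact Or.inl rfl
  | succ n => simp only [aRun]; split_ifs <;> simp

theorem isInfTrace_aRun : M7.toMDP.IsInfTrace aRun := by
  intro n
  rw [aRun]
  rcases aRun_eq n with h | h | h <;> simp only [h, reduceCtorEq, if_true, if_false] <;>
    exact ⟨.a, _, rfl, by simp [d2]; norm_num⟩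

theorem K_aRun_ne_zero {n : ℕ} {y : St7} (hK : M7.toMDP.K (aRun n) .a y ≠ 0) :
    y = aRun (n + 1) ∨ C7 y = 1 := by
  rw [aRun]
  rcases aRun_eq n with h | h | h <;> rw [h] at hK ⊢ <;> cases y <;>
    simp_all [MDP.K, M7, P7, d2, C7]

theorem C7_aRun_eq_zero {n : ℕ} (h : Even (C7 (aRun n))) : C7 (aRun n) = 0 := by
  rcases aRun_eq n with h' | h' | h' <;> rw [h'] at h ⊢
  · rfl
  · exact absurd h (by decide)
  · rfl

theorem aRun_succ_eq_qM {n : ℕ} (h : Even (C7 (aRun n))) : aRun (n + 1) = qM := by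
  rw [aRun, if_neg]
  rintro h'
  rw [h'] at h
  exact absurd h (by decide)

theorem eq_a_of_f_prefixList_aRun_ne_zero (fp : M7.toMDP.Policy) (hpos : fp.IsPositional)
    (hqM : ∀ act ≠ .a, fp.f [qI, qM] act = 0) {n : ℕ} {act : Act7}
    (hf : fp.f (prefixList aRun n) act ≠ 0) : act = .a := by
  by_contra hact
  have hlast := getLast?_prefixList aRun n
  rcases aRun_eq n with h | h | h <;> rw [h] at hlast
  · exact hf (fp.support _ _ act hlast (by cases act <;> simp_all [M7, P7]))
  · exact hf (hpos _ [qI, qM] hlast ▸ hqM act hact)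
  · exact hf (fp.support _ _ act hlast (by cases act <;> simp_all [M7, P7]))

-- Leaving `aRun` means entering an absorbing state of color `1`.
theorem prefixList_aRun_append (fp : M7.toMDP.Policy) (hpos : fp.IsPositional)
    (hqM : ∀ act ≠ .a, fp.f [qI, qM] act = 0) (u : List St7) (n : ℕ)
    (hu : contP M7.toMDP.K fp.f (prefixList aRun n) u ≠ 0)
    (heven : ∀ s, u.getLast? = some s → Even (C7 s)) :
    prefixList aRun n ++ u = prefixList aRun (n + u.length) := by
  induction u generalizing n with
  | nil => simp
  | cons y w ih =>
    obtain ⟨act, hf, hK⟩ :=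
      exists_ne_zero_of_stepP_ne_zero _ _ (getLast?_prefixList aRun n) (left_ne_zero_of_mul hu)
    obtain rfl := eq_a_of_f_prefixList_aRun_ne_zero fp hpos hqM hf
    have hw := right_ne_zero_of_mul hu
    obtain rfl | hy := K_aRun_ne_zero hK
    · rw [← prefixList_succ] at hw
      have hw' := ih (n + 1) hw fun s hs => heven s (by rw [List.getLast?_cons, hs]; rfl)
      rw [prefixList_succ, List.append_assoc, List.singleton_append] at hw'
      rw [hw', List.length_cons]
      ac_rfl
    · exact absurd (heven y (getLast?_eq_of_C7_eq_one fp.f hy hw)) (by simp [hy])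

theorem exists_goal_label_lt {fp : M7.toMDP.Policy} {l : List St7 → ℕ} {l' : List St7 → Bool}
    (hra : RiskAverseFrom M7 fp l l' 0.54 qI) (hpos : fp.IsPositional) {n : ℕ}
    (hn : n = 0 ∨ l' (prefixList aRun n) = true) :
    ∃ N, n + 1 ≤ N ∧ l' (prefixList aRun N) = true ∧
      l (prefixList aRun N) < l (prefixList aRun (n + 1)) := by
  have hTgt : ∀ h ∈ {h | l' h = true}, ∀ s, h.getLast? = some s → Even (C7 s) :=
    fun h hh s hs => (hra.goal_label h s hs hh).2
  have hqM : ∀ act ≠ Act7.a, fp.f [qI, qM] act = 0 := fun _ =>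
    f_qI_qM_eq_zero_of_le_reachP fp hTgt (hra.reach_goal [qI] rfl (Or.inl rfl))
  have hstart : aRun (n + 1) = qM := by
    refine aRun_succ_eq_qM ?_
    rcases hn with rfl | hn
    · exact ⟨0, rfl⟩
    · exact hTgt _ hn _ (getLast?_prefixList aRun n)
  have hreach := hra.reach_goal (prefixList aRun n) (head?_prefixList aRun n)
    (hn.imp_left fun h => by subst h; rfl)
  obtain ⟨u, hu, hc⟩ := exists_contP_ne_zero_of_reachP_pos _ _ (hreach.trans_lt' (by norm_num))
  have happ := prefixList_aRun_append fp hpos hqM u n hc fun s hs =>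
    hTgt _ hu.2.1 s (by rw [List.getLast?_append_of_ne_nil _ hu.1, hs])
  have hgoal : l' (prefixList aRun (n + u.length)) = true := happ ▸ hu.2.1
  refine ⟨n + u.length, by have := List.length_pos_iff.2 hu.1; omega, hgoal, ?_⟩
  have hN : l (prefixList aRun (n + u.length)) ≤ C7 (aRun (n + u.length)) ∧
      Even (C7 (aRun (n + u.length))) := hra.goal_label _ _ (getLast?_prefixList aRun _) hgoal
  have hodd : C7 qM < l (prefixList aRun (n + 1)) := hstart ▸
    hra.odd_label _ _ (getLast?_prefixList aRun (n + 1)) (by rw [hstart]; decide)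
  rw [C7_aRun_eq_zero hN.2] at hN
  exact hN.1.trans_lt (Nat.zero_lt_of_lt hodd)

open Finset in
theorem not_riskAverseFrom_of_isPositional {fp : M7.toMDP.Policy} {l : List St7 → ℕ}
    {l' : List St7 → Bool} (hra : RiskAverseFrom M7 fp l l' 0.54 qI) (hpos : fp.IsPositional) :
    False := by
  have hcount (j : ℕ) : ∃ n, (n = 0 ∨ l' (prefixList aRun n) = true) ∧
      j ≤ #{i ∈ range n | l (prefixList aRun (i + 1)) < l (prefixList aRun i)} := by
    induction j with
    | zero => exact ⟨0, Or.inl rfl, Nat.zero_le _⟩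
    | succ j ih =>
      obtain ⟨n, hn, hj⟩ := ih
      obtain ⟨N, hnN, hgoal, hlt⟩ := exists_goal_label_lt hra hpos hn
      exact ⟨N, Or.inr hgoal, hj.trans_lt
        (card_descents_lt_of_lt (L := fun i => l (prefixList aRun i)) (Nat.le_succ n) hnN hlt)⟩
  obtain ⟨k, hk⟩ := hra.bounded
  obtain ⟨n, -, hn⟩ := hcount (k + 1)
  exact absurd (hk aRun rfl isInfTrace_aRun n) (by omega)

end M7

/-- The parity MDP of Figure 3 is well-formed, admits a finite-state
`0.54`-risk-averse policy, but admits no positional `0.54`-risk-averse policy. -/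
theorem example_needs_memory :
    M7.toMDP.WellFormed ∧
    (∃ (fp : M7.toMDP.Policy) (l : List St7 → ℕ) (l' : List St7 → Bool),
      RiskAverseFrom M7 fp l l' 0.54 St7.qI ∧ fp.IsFiniteState) ∧
    ¬ ∃ (fp : M7.toMDP.Policy) (l : List St7 → ℕ) (l' : List St7 → Bool),
      RiskAverseFrom M7 fp l l' 0.54 St7.qI ∧ fp.IsPositional :=
  ⟨M7.wellFormed,
    ⟨M7.policy, M7.label, M7.goal, M7.riskAverseFrom_policy, M7.policy_isFiniteState⟩,
    fun ⟨_, _, _, hra, hpos⟩ => M7.not_riskAverseFrom_of_isPositional hra hpos⟩
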